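/- Let R be a principal ideal domain and (M, λ) a non-degenerate symmetric bilinear form on a finitely generated free R-module. A non-degenerate form M is metabolic if and only if its isotropic rank z(M) (the maximal length of an isotropic unimodular sequence) equals rank(M)/2. Moreover z(M) ≤ rank(M)/2 always. -/

import Mathlib

/-!
Let `L` be an isotropic direct summand of `M` of rank `k` and `L^⊥` the kernel of
`m ↦ λ(m, -)|_L : M → L*`. Since `λ` is unimodular and `L` is a summand, this map is onto, so
`rank M = k + rank L^⊥`; as `L ⊆ L^⊥`, this gives `2k ≤ rank M`. When `2k = rank M`, `L^⊥ ⊇ L`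
has the same rank as the summand `L`, so its intersection with a complement of `L` has rank zero;
as `M` is torsion-free, that intersection vanishes and `L^⊥ = L`. Conversely a
Lagrangian is a summand because `L*` is projective, and over a PID it is free, so a basis of it
is an isotropic unimodular sequence of length `rank M / 2`.
-/

/-- An isotropic unimodular sequence: the `v i` form a basis of a free direct summand
of `M` and are pairwise (and self) orthogonal for `B`. -/
def IsoUnimodSeq (R : Type*) [CommRing R] {M : Type*} [AddCommGroup M] [Module R M]
    (B : LinearMap.BilinForm R M) {k : ℕ} (v : Fin k → M) : Prop :=
  LinearIndependent R v ∧
  (∃ q : Submodule R M, IsCompl (Submodule.span R (Set.range v)) q) ∧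
  ∀ i j, B (v i) (v j) = 0

/-- A form `B` on `M` is metabolic if it has a Lagrangian `L`: the form vanishes on
`L`, and the null-composite sequence `0 → L → M ≅ M* → L* → 0` is exact; i.e. the map
`M → L*`, `m ↦ B m |_L`, has kernel exactly `L` and is surjective. -/
def Metabolic (R : Type*) [CommRing R] {M : Type*} [AddCommGroup M] [Module R M]
    (B : LinearMap.BilinForm R M) : Prop :=
  ∃ L : Submodule R M,
    (∀ x ∈ L, ∀ y ∈ L, B x y = 0) ∧
    LinearMap.ker ((L.subtype.dualMap).comp B) = L ∧
    Function.Surjective ((L.subtype.dualMap).comp B)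

open Module LinearMap Submodule

theorem LinearMap.exists_isCompl_ker_of_surjective {R M P : Type*} [Ring R] [AddCommGroup M]
    [Module R M] [AddCommGroup P] [Module R P] [Projective R P] {φ : M →ₗ[R] P}
    (hφ : Function.Surjective φ) : ∃ q : Submodule R M, IsCompl (ker φ) q := by
  obtain ⟨s, hs⟩ := projective_lifting_property φ LinearMap.id hφ
  have hidem : IsIdempotentElem (s ∘ₗ φ) := by
    change s ∘ₗ (φ ∘ₗ s) ∘ₗ φ = s ∘ₗ φ
    rw [hs, LinearMap.id_comp]
  have hker : ker (s ∘ₗ φ) = ker φ := by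
    rw [ker_comp, ker_eq_bot_of_inverse hs, comap_bot]
  exact ⟨_, hker ▸ hidem.isCompl.symm⟩

theorem Submodule.eq_of_le_of_isCompl_of_finrank_le {R M : Type*} [CommRing R] [IsDomain R]
    [AddCommGroup M] [Module R M] [IsTorsionFree R M] {L K q : Submodule R M}
    [Module.Finite R K] (hLK : L ≤ K) (hq : IsCompl L q) (hrank : finrank R K ≤ finrank R L) :
    K = L := by
  have hmap : K.map (L.projectionOnto q hq) = ⊤ :=
    eq_top_iff.mpr fun l _ ↦ ⟨l, hLK l.2, projectionOnto_apply_left hq l⟩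
  have hdisj : Disjoint K q := by
    simpa [ker_projectionOnto] using
      disjoint_ker_of_finrank_le (L.projectionOnto q hq) (by rwa [hmap, finrank_top])
  calc K = (L ⊔ q) ⊓ K := by rw [hq.sup_eq_top, top_inf_eq]
    _ = L ⊔ q ⊓ K := sup_inf_assoc_of_le q hLK
    _ = L := by rw [inf_comm, hdisj.eq_bot, sup_bot_eq]

namespace LinearMap.BilinForm

section CommRing

variable {R M : Type*} [CommRing R] [AddCommGroup M] [Module R M]
  (B : LinearMap.BilinForm R M) (L : Submodule R M)

def restrictDual : M →ₗ[R] Dual R L :=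
  L.subtype.dualMap ∘ₗ B

@[simp]
theorem restrictDual_apply (m : M) (l : L) : B.restrictDual L m l = B m l :=
  rfl

theorem le_ker_restrictDual_iff :
    L ≤ ker (B.restrictDual L) ↔ ∀ x ∈ L, ∀ y ∈ L, B x y = 0 := by
  simp only [SetLike.le_def, LinearMap.mem_ker, DFunLike.ext_iff, Subtype.forall,
    restrictDual_apply, LinearMap.zero_apply]

theorem span_le_ker_restrictDual {ι : Type*} {v : ι → M} (hv : ∀ i j, B (v i) (v j) = 0) :
    span R (Set.range v) ≤ ker (B.restrictDual (span R (Set.range v))) := by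
  refine span_le.mpr ?_
  rintro _ ⟨i, rfl⟩
  suffices span R (Set.range v) ≤ ker (B (v i)) by
    simpa [DFunLike.ext_iff] using fun y hy ↦ this hy
  exact span_le.mpr (by rintro _ ⟨j, rfl⟩; exact hv i j)

variable {B L} in
theorem restrictDual_surjective (hB : Function.Surjective B) {q : Submodule R M}
    (hq : IsCompl L q) : Function.Surjective (B.restrictDual L) := by
  intro f
  obtain ⟨m, hm⟩ := hB (f ∘ₗ L.projectionOnto q hq)
  refine ⟨m, LinearMap.ext fun l ↦ ?_⟩
  simp [hm, projectionOnto_apply_left]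

end CommRing

section IsDomain

variable {R M : Type*} [CommRing R] [IsDomain R] [AddCommGroup M] [Module R M]
  [Module.Finite R M] {B : LinearMap.BilinForm R M} {L : Submodule R M}

theorem finrank_add_finrank_ker_restrictDual [Module.Free R L] [Module.Finite R L]
    (h : Function.Surjective (B.restrictDual L)) :
    finrank R L + finrank R (ker (B.restrictDual L)) = finrank R M := by
  rw [← (ker (B.restrictDual L)).finrank_quotient_add_finrank,
    ((B.restrictDual L).quotKerEquivOfSurjective h).finrank_eq,
    (Free.chooseBasis R L).toDualEquiv.finrank_eq]

end IsDomain

end LinearMap.BilinForm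

theorem IsoUnimodSeq.add_finrank_ker_restrictDual {R M : Type*} [CommRing R] [IsDomain R]
    [AddCommGroup M] [Module R M] [Module.Finite R M] {B : LinearMap.BilinForm R M} {k : ℕ}
    {v : Fin k → M} (hv : IsoUnimodSeq R B v) (hB : Function.Surjective B) :
    k + finrank R (ker (B.restrictDual (span R (Set.range v)))) = finrank R M := by
  obtain ⟨hli, ⟨q, hq⟩, -⟩ := hv
  have : Module.Free R (span R (Set.range v)) := .of_basis (Basis.span hli)
  have : Module.Finite R (span R (Set.range v)) := .of_basis (Basis.span hli)
  rw [← B.finrank_add_finrank_ker_restrictDual (B.restrictDual_surjective hB hq),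
    finrank_span_eq_card hli, Fintype.card_fin]

section PrincipalIdealDomain

variable {R M : Type*} [CommRing R] [IsDomain R] [IsPrincipalIdealRing R] [AddCommGroup M]
  [Module R M] [Module.Finite R M] {B : LinearMap.BilinForm R M}

namespace IsoUnimodSeq

variable {k : ℕ} {v : Fin k → M}

theorem two_mul_le_finrank (hv : IsoUnimodSeq R B v) (hB : Function.Surjective B) :
    2 * k ≤ finrank R M := by
  have hk : k ≤ finrank R (ker (B.restrictDual (span R (Set.range v)))) := by
    simpa [finrank_span_eq_card hv.1] using finrank_mono (B.span_le_ker_restrictDual hv.2.2)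
  have := hv.add_finrank_ker_restrictDual hB
  omega

theorem metabolic [Module.Free R M] (hv : IsoUnimodSeq R B v) (hB : Function.Surjective B)
    (hk : 2 * k = finrank R M) : Metabolic R B := by
  have hrank := hv.add_finrank_ker_restrictDual hB
  obtain ⟨hli, ⟨q, hq⟩, horth⟩ := hv
  have hle := B.span_le_ker_restrictDual horth
  refine ⟨span R (Set.range v), (B.le_ker_restrictDual_iff _).mp hle, ?_,
    B.restrictDual_surjective hB hq⟩
  change ker (B.restrictDual _) = _
  refine Submodule.eq_of_le_of_isCompl_of_finrank_le hle hq ?_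
  rw [finrank_span_eq_card hli, Fintype.card_fin]
  omega

end IsoUnimodSeq

theorem Metabolic.exists_isoUnimodSeq [Module.Free R M] (h : Metabolic R B) :
    ∃ (k : ℕ) (v : Fin k → M), IsoUnimodSeq R B v ∧ 2 * k = finrank R M := by
  obtain ⟨L, hiso, hker, hsurj⟩ := h
  change ker (B.restrictDual L) = L at hker
  change Function.Surjective (B.restrictDual L) at hsurj
  let b := Module.finBasis R L
  have hspan : span R (Set.range (L.subtype ∘ b)) = L := by
    rw [Set.range_comp, ← Submodule.map_span, b.span_eq, Submodule.map_top, range_subtype]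
  refine ⟨_, L.subtype ∘ b, ⟨b.linearIndependent.map' _ L.ker_subtype, ?_, ?_⟩, ?_⟩
  · rw [hspan, ← hker]
    exact exists_isCompl_ker_of_surjective hsurj
  · exact fun i j ↦ hiso _ (b i).2 _ (b j).2
  · have := B.finrank_add_finrank_ker_restrictDual hsurj
    rw [hker] at this
    omega

end PrincipalIdealDomain

theorem stmt_17_general (R : Type*) [CommRing R] [IsDomain R] [IsPrincipalIdealRing R]
    (M : Type*) [AddCommGroup M] [Module R M] [Module.Free R M] [Module.Finite R M]
    (B : LinearMap.BilinForm R M)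
    (hnd : Function.Bijective fun v : M => B v) :
    (∀ (k : ℕ) (v : Fin k → M), IsoUnimodSeq R B v → 2 * k ≤ Module.finrank R M) ∧
    (Metabolic R B ↔
      ∃ (k : ℕ) (v : Fin k → M), IsoUnimodSeq R B v ∧ 2 * k = Module.finrank R M) :=
  ⟨fun _ _ hv ↦ hv.two_mul_le_finrank hnd.2, Metabolic.exists_isoUnimodSeq,
    fun ⟨_, _, hv, hk⟩ ↦ hv.metabolic hnd.2 hk⟩

/-- For a non-degenerate symmetric form over a PID, the isotropic rank
is at most `rank(M)/2` (every isotropic unimodular sequence has length `≤ rank(M)/2`),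
and the form is metabolic iff there is an isotropic unimodular sequence of length
exactly `rank(M)/2`. -/
theorem stmt_17 (R : Type*) [CommRing R] [IsDomain R] [IsPrincipalIdealRing R]
    (M : Type*) [AddCommGroup M] [Module R M] [Module.Free R M] [Module.Finite R M]
    (B : LinearMap.BilinForm R M) (hsymm : B.IsSymm)
    (hnd : Function.Bijective fun v : M => B v) :
    (∀ (k : ℕ) (v : Fin k → M), IsoUnimodSeq R B v → 2 * k ≤ Module.finrank R M) ∧
    (Metabolic R B ↔
      ∃ (k : ℕ) (v : Fin k → M), IsoUnimodSeq R B v ∧ 2 * k = Module.finrank R M) :=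
  stmt_17_general R M B hnd
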